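/- For every A ∈ ℝ, the Bowen–York field S^A(x)_{ab} = (A/‖x‖³)·(3xₐx_b/‖x‖² − δ_{ab}) on ℝ³∖{0} is a smooth solution of the Euclidean momentum constraint: for every x ≠ 0 the matrix S^A(x) is symmetric, has vanishing trace Σₐ S^A(x)_{aa} = 0, and is divergence-free, i.e. Σₐ ∂ₐ S^A(x)_{ab} = 0 for each b ∈ {1,2,3}. -/

import Mathlib

/-- The Bowen–York tensor `S^A(x)_{ab} = (A/‖x‖³)(3 xₐ x_b/‖x‖² − δ_{ab})`. -/
noncomputable def bowenYorkA (A : ℝ) (x : EuclideanSpace ℝ (Fin 3)) (a b : Fin 3) : ℝ :=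
  (A / ‖x‖ ^ 3) * (3 * x a * x b / ‖x‖ ^ 2 - if a = b then 1 else 0)

/-!
With `r = ‖x‖` we have `S^A = A (3 xₐ x_b r⁻⁵ − δ_{ab} r⁻³)` and `∂_v rᵏ = k rᵏ⁻² ⟨x, v⟩`.
Summing `∂ₐ S^A_{ab}` over `a`, the term `3 xₐ x_b r⁻⁵` contributes `(9 + 3 − 15) x_b r⁻⁵` and
`−δ_{ab} r⁻³` contributes `3 x_b r⁻⁵`, so the divergence vanishes; in dimension `n` the same count
gives `3 (n − 3) x_b r⁻⁵`.
-/

open scoped RealInnerProductSpace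
open ContinuousLinearMap

local notation "E3" => EuclideanSpace ℝ (Fin 3)

theorem hasFDerivAt_norm_zpow {E : Type*} [NormedAddCommGroup E] [InnerProductSpace ℝ E]
    {x : E} (hx : x ≠ 0) (k : ℤ) :
    HasFDerivAt (fun y : E => ‖y‖ ^ k) ((k * ‖x‖ ^ (k - 2)) • innerSL ℝ x) x := by
  have hn : ‖x‖ ≠ 0 := norm_ne_zero_iff.mpr hx
  have hnorm : HasFDerivAt (‖·‖) (‖x‖⁻¹ • innerSL ℝ x) x := by
    convert (hasStrictFDerivAt_norm_sq x).hasFDerivAt.sqrt (by positivity) using 1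
    · ext y
      simp [Real.sqrt_sq (norm_nonneg y)]
    · ext v
      simp only [smul_apply, coe_innerSL_apply, smul_eq_mul, Real.sqrt_sq (norm_nonneg x),
        nsmul_eq_mul, Nat.cast_ofNat]
      field_simp
  refine ((hasDerivAt_zpow k ‖x‖ (Or.inl hn)).comp_hasFDerivAt x hnorm).congr_fderiv ?_
  rw [smul_smul, mul_assoc, ← zpow_neg_one, ← zpow_add₀ hn]
  ring_nf

theorem bowenYorkA_comm (A : ℝ) (x : E3) (a b : Fin 3) :
    bowenYorkA A x a b = bowenYorkA A x b a := by
  simp only [bowenYorkA, @eq_comm _ a b]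
  ring

theorem sum_bowenYorkA_diag (A : ℝ) (x : E3) : ∑ a, bowenYorkA A x a a = 0 := by
  rcases eq_or_ne ‖x‖ 0 with hx | hx
  · simp [bowenYorkA, hx]
  simp only [bowenYorkA, if_true, ← Finset.mul_sum]
  refine mul_eq_zero_of_right _ ?_
  have hr : ‖x‖ ^ 2 = x 0 ^ 2 + x 1 ^ 2 + x 2 ^ 2 := by
    rw [EuclideanSpace.real_norm_sq_eq, Fin.sum_univ_three]
  calc ∑ a, (3 * x a * x a / ‖x‖ ^ 2 - 1) = 3 * (x 0 ^ 2 + x 1 ^ 2 + x 2 ^ 2) / ‖x‖ ^ 2 - 3 := by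
        rw [Fin.sum_univ_three]; ring
    _ = 0 := by rw [← hr, mul_div_assoc, div_self (pow_ne_zero 2 hx)]; ring

/-- Both sides vanish at `y = 0` (`A / 0 = 0` and `0 ^ (-5) = 0`), so this is an identity of
functions on all of `ℝ³`. -/
theorem bowenYorkA_eq_zpow (A : ℝ) (a b : Fin 3) (y : E3) :
    bowenYorkA A y a b =
      A * (3 * y a * y b * ‖y‖ ^ (-5 : ℤ) - (if a = b then 1 else 0) * ‖y‖ ^ (-3 : ℤ)) := by
  rcases eq_or_ne ‖y‖ 0 with hy | hy
  · simp [bowenYorkA, hy]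
  · simp only [bowenYorkA, zpow_neg, zpow_ofNat]
    field_simp

theorem fderiv_bowenYorkA_apply (A : ℝ) {x : E3} (hx : x ≠ 0) (a b : Fin 3) (v : E3) :
    fderiv ℝ (fun y => bowenYorkA A y a b) x v =
      A * (3 * (v a * x b + x a * v b) * ‖x‖ ^ (-5 : ℤ)
        - 15 * x a * x b * ⟪x, v⟫ * ‖x‖ ^ (-7 : ℤ)
        + 3 * (if a = b then 1 else 0) * ⟪x, v⟫ * ‖x‖ ^ (-5 : ℤ)) := by
  have hproj (i : Fin 3) : HasFDerivAt (fun y : E3 => y i) (EuclideanSpace.proj i : E3 →L[ℝ] ℝ) x :=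
    (EuclideanSpace.proj (𝕜 := ℝ) i).hasFDerivAt
  rw [funext (bowenYorkA_eq_zpow A a b)]
  generalize (if a = b then (1 : ℝ) else 0) = δ
  have hD : HasFDerivAt (fun y : E3 => A * (3 * y a * y b * ‖y‖ ^ (-5 : ℤ) - δ * ‖y‖ ^ (-3 : ℤ)))
      _ x :=
    (((((hproj a).const_mul 3).mul (hproj b)).mul (hasFDerivAt_norm_zpow hx (-5))).sub
      ((hasFDerivAt_norm_zpow hx (-3)).const_mul δ)).const_mul A
  rw [hD.fderiv]
  simp only [add_apply, sub_apply, smul_apply, coe_innerSL_apply, smul_eq_mul, PiLp.proj_apply,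
    Pi.mul_apply]
  push_cast
  ring

theorem sum_fderiv_bowenYorkA_single (A : ℝ) {x : E3} (hx : x ≠ 0) (b : Fin 3) :
    ∑ a, fderiv ℝ (fun y => bowenYorkA A y a b) x (EuclideanSpace.single a 1) = 0 := by
  have hn : ‖x‖ ≠ 0 := norm_ne_zero_iff.mpr hx
  simp_rw [fderiv_bowenYorkA_apply A hx, ← Finset.mul_sum]
  refine mul_eq_zero_of_right A ?_
  calc _ = ∑ a, (3 * x b * ‖x‖ ^ (-5 : ℤ) + 6 * ‖x‖ ^ (-5 : ℤ) * (if a = b then x a else 0)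
          - 15 * x b * ‖x‖ ^ (-7 : ℤ) * x a ^ 2) := by
        refine Finset.sum_congr rfl fun a _ => ?_
        rcases eq_or_ne a b with rfl | hab
        · simp only [PiLp.single_apply, EuclideanSpace.inner_single_right, if_true, conj_trivial]
          ring
        · simp only [PiLp.single_apply, EuclideanSpace.inner_single_right, if_true, conj_trivial,
            hab, hab.symm, if_false]
          ring
    _ = 9 * x b * ‖x‖ ^ (-5 : ℤ) + 6 * ‖x‖ ^ (-5 : ℤ) * x b
          - 15 * x b * ‖x‖ ^ (-7 : ℤ) * ‖x‖ ^ 2 := by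
        simp only [Finset.sum_sub_distrib, Finset.sum_add_distrib, Finset.sum_const,
          Finset.card_univ, Fintype.card_fin, nsmul_eq_mul, ← Finset.mul_sum, Finset.sum_ite_eq',
          Finset.mem_univ, if_true, EuclideanSpace.real_norm_sq_eq]
        push_cast
        ring
    _ = 0 := by
        simp only [zpow_neg, zpow_ofNat]
        field_simp
        ring

/-- For every `A ∈ ℝ`, the Bowen–York field `S^A` on `ℝ³∖{0}` is a solution of the Euclidean
momentum constraint: for every `x ≠ 0` the matrix `S^A(x)` is symmetric, trace-free and
divergence-free. -/
theorem stmt_11 (A : ℝ) :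
    ∀ x : EuclideanSpace ℝ (Fin 3), x ≠ 0 →
      (∀ a b : Fin 3, bowenYorkA A x a b = bowenYorkA A x b a) ∧
      (∑ a : Fin 3, bowenYorkA A x a a) = 0 ∧
      (∀ b : Fin 3,
        ∑ a : Fin 3,
          fderiv ℝ (fun y : EuclideanSpace ℝ (Fin 3) => bowenYorkA A y a b) x
            (EuclideanSpace.single a 1) = 0) :=
  fun x hx => ⟨bowenYorkA_comm A x, sum_bowenYorkA_diag A x, sum_fderiv_bowenYorkA_single A hx⟩
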